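/- arXiv:1006.1398 — 5 statements merged into one kernel-verified Lean document; each statement's English description precedes it below -/
import Mathlib

section
/- Let H be a complex Hilbert space, let Φ : B(H) → B(H) be a positive linear map which is normal on bounded sequences, and let Q be superharmonic for Φ. Then there exist unique operators Q_p and Q_h in B(H) such that Q = Q_p + Q_h, Q_p is pure superharmonic for Φ, and Q_h is harmonic for Φ. (Q_h is the strong-operator-topology limit of the decreasing sequence Φⁿ(Q), and Q_p = Q − Q_h.) -/
open Filter

/-- A sequence of bounded operators converges to zero in the strong operator topology. -/
def SOTLimZero {H : Type*} [NormedAddCommGroup H] [InnerProductSpace ℂ H]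
    (A : ℕ → (H →L[ℂ] H)) : Prop :=
  ∀ x : H, Tendsto (fun n => A n x) atTop (nhds 0)

/-- `Q` is superharmonic for `Φ`: `Q ≥ 0` and `Φ(Q) ≤ Q`. -/
def Superharmonic {H : Type*} [NormedAddCommGroup H] [InnerProductSpace ℂ H] [CompleteSpace H]
    (Φ : (H →L[ℂ] H) → (H →L[ℂ] H)) (Q : H →L[ℂ] H) : Prop :=
  Q.IsPositive ∧ (Q - Φ Q).IsPositive

/-- `Q` is pure superharmonic for `Φ`: superharmonic with `Φⁿ(Q) → 0` in the SOT. -/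
def PureSuperharmonic {H : Type*} [NormedAddCommGroup H] [InnerProductSpace ℂ H] [CompleteSpace H]
    (Φ : (H →L[ℂ] H) → (H →L[ℂ] H)) (Q : H →L[ℂ] H) : Prop :=
  Superharmonic Φ Q ∧ SOTLimZero (fun n => Φ^[n] Q)

/-- `Q` is harmonic for `Φ`: `Q ≥ 0` and `Φ(Q) = Q`. -/
def Harmonic {H : Type*} [NormedAddCommGroup H] [InnerProductSpace ℂ H] [CompleteSpace H]
    (Φ : (H →L[ℂ] H) → (H →L[ℂ] H)) (Q : H →L[ℂ] H) : Prop :=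
  Q.IsPositive ∧ Φ Q = Q

/-- `Φ` is normal on bounded sequences: it is WOT-continuous on norm-bounded sequences. -/
def NormalOnBddSeq {H : Type*} [NormedAddCommGroup H] [InnerProductSpace ℂ H]
    (Φ : (H →L[ℂ] H) → (H →L[ℂ] H)) : Prop :=
  ∀ (A : ℕ → (H →L[ℂ] H)) (L : H →L[ℂ] H) (M : ℝ),
    (∀ n, ‖A n‖ ≤ M) →
    (∀ x y : H, Tendsto (fun n => (inner ℂ (A n x) y : ℂ)) atTop (nhds (inner ℂ (L x) y))) →
    (∀ x y : H, Tendsto (fun n => (inner ℂ (Φ (A n) x) y : ℂ)) atTop (nhds (inner ℂ (Φ L x) y)))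

set_option synthInstance.maxHeartbeats 1000000
set_option maxHeartbeats 2000000

/-- Cauchy–Schwarz-type estimate for a positive operator. -/
lemma pos_norm_apply_sq_le {H : Type*} [NormedAddCommGroup H] [InnerProductSpace ℂ H]
    [CompleteSpace H] (A : H →L[ℂ] H) (hA : (0 : H →L[ℂ] H) ≤ A) (x : H) :
    ‖A x‖ ^ 2 ≤ ‖A‖ * (inner ℂ (A x) x : ℂ).re := by
  set S := CFC.sqrt A with hSdef
  have hS : IsSelfAdjoint S := IsSelfAdjoint.of_nonneg (CFC.sqrt_nonneg A)
  have hSS : S * S = A := CFC.sqrt_mul_sqrt_self A hA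
  have happ : A x = S (S x) := by rw [← hSS]; rfl
  have h2 : ‖S x‖ ^ 2 = (inner ℂ (A x) x : ℂ).re := by
    have hsymm : (inner ℂ (S (S x)) x : ℂ) = inner ℂ (S x) (S x) := hS.isSymmetric (S x) x
    rw [happ, hsymm]
    simp [← inner_self_eq_norm_sq (𝕜 := ℂ) (S x)]
  have hnorm : ‖S‖ * ‖S‖ = ‖A‖ := by
    have := CStarRing.norm_star_mul_self (x := S)
    rw [hS.star_eq, hSS] at this
    exact this.symm
  calc ‖A x‖ ^ 2 = ‖S (S x)‖ ^ 2 := by rw [happ]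
    _ ≤ (‖S‖ * ‖S x‖) ^ 2 := by
        have := S.le_opNorm (S x)
        exact pow_le_pow_left₀ (norm_nonneg _) this 2
    _ = (‖S‖ * ‖S‖) * ‖S x‖ ^ 2 := by ring
    _ = ‖A‖ * (inner ℂ (A x) x : ℂ).re := by rw [hnorm, h2]

/-- Positivity is preserved under WOT limits. -/
lemma isPositive_of_wot_limit {H : Type*} [NormedAddCommGroup H] [InnerProductSpace ℂ H]
    [CompleteSpace H] (T : H →L[ℂ] H) (A : ℕ → (H →L[ℂ] H)) (hA : ∀ n, (A n).IsPositive)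
    (h : ∀ x : H, Tendsto (fun n => (inner ℂ (A n x) x : ℂ)) atTop (nhds (inner ℂ (T x) x))) :
    T.IsPositive := by
  rw [ContinuousLinearMap.isPositive_iff_complex]
  intro x
  have hm := fun n => (ContinuousLinearMap.isPositive_iff_complex (A n)).mp (hA n) x
  have hre : Tendsto (fun n => (inner ℂ (A n x) x : ℂ).re) atTop
      (nhds (inner ℂ (T x) x : ℂ).re) := (Complex.continuous_re.tendsto _).comp (h x)
  have him : Tendsto (fun n => (inner ℂ (A n x) x : ℂ).im) atTop
      (nhds (inner ℂ (T x) x : ℂ).im) := (Complex.continuous_im.tendsto _).comp (h x)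
  have him0 : ∀ n, (inner ℂ (A n x) x : ℂ).im = 0 := by
    intro n
    have h1 := (hm n).1
    have := congrArg Complex.im h1
    simpa using this.symm
  have himT : (inner ℂ (T x) x : ℂ).im = 0 := by
    have h0 : Tendsto (fun n => (inner ℂ (A n x) x : ℂ).im) atTop (nhds 0) := by
      simp only [him0]; exact tendsto_const_nhds
    exact tendsto_nhds_unique him h0
  constructor
  · simp only [RCLike.re_to_complex]
    exact Complex.conj_eq_iff_re.mp (Complex.conj_eq_iff_im.mpr himT)
  · simp only [RCLike.re_to_complex]
    exact le_of_tendsto_of_tendsto' tendsto_const_nhds hre fun n => by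
      simpa using (hm n).2

/-- Riesz decomposition: a superharmonic operator for a positive linear map which is
normal on bounded sequences decomposes uniquely as a sum of a pure superharmonic
operator and a harmonic operator. -/
theorem riesz_decomposition_superharmonic
    {H : Type*} [NormedAddCommGroup H] [InnerProductSpace ℂ H] [CompleteSpace H]
    (Φ : (H →L[ℂ] H) →ₗ[ℂ] (H →L[ℂ] H))
    (hpos : ∀ x : H →L[ℂ] H, x.IsPositive → (Φ x).IsPositive)
    (hnormal : NormalOnBddSeq ⇑Φ)
    (Q : H →L[ℂ] H) (hQ : Superharmonic ⇑Φ Q) :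
    ∃! p : (H →L[ℂ] H) × (H →L[ℂ] H),
      Q = p.1 + p.2 ∧ PureSuperharmonic ⇑Φ p.1 ∧ Harmonic ⇑Φ p.2 := by
  obtain ⟨hQpos, hQsup⟩ := hQ
  have hmono : ∀ {a b : H →L[ℂ] H}, a ≤ b → Φ a ≤ Φ b := by
    intro a b hab
    rw [ContinuousLinearMap.le_def] at hab ⊢
    have := hpos _ hab
    rwa [map_sub] at this
  have hQ0 : (0 : H →L[ℂ] H) ≤ Q := (ContinuousLinearMap.nonneg_iff_isPositive Q).mpr hQpos
  have hΦQ : Φ Q ≤ Q := (ContinuousLinearMap.le_def _ _).mpr hQsup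
  -- iterates are positive
  have hpos_it : ∀ n, (0 : H →L[ℂ] H) ≤ Φ^[n] Q := by
    intro n
    induction n with
    | zero => simpa using hQ0
    | succ n ih =>
        rw [Function.iterate_succ_apply']
        exact (ContinuousLinearMap.nonneg_iff_isPositive _).mpr
          (hpos _ ((ContinuousLinearMap.nonneg_iff_isPositive _).mp ih))
  -- iterates are antitone
  have hstep : ∀ n, Φ^[n+1] Q ≤ Φ^[n] Q := by
    intro n
    induction n with
    | zero => simpa using hΦQ
    | succ n ih =>
        have h := hmono ih
        rwa [← Function.iterate_succ_apply' (⇑Φ) (n+1) Q,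
          ← Function.iterate_succ_apply' (⇑Φ) n Q] at h
  have hanti : Antitone (fun n => Φ^[n] Q) := antitone_nat_of_succ_le hstep
  have hleQ : ∀ n, Φ^[n] Q ≤ Q := fun n => by
    simpa using hanti (Nat.zero_le n)
  have hnorm : ∀ n, ‖Φ^[n] Q‖ ≤ ‖Q‖ := fun n =>
    CStarAlgebra.norm_le_norm_of_nonneg_of_le (hpos_it n) (hleQ n)
  -- the scalar sequences
  set a : ℕ → H → ℝ := fun n x => (inner ℂ ((Φ^[n] Q) x) x : ℂ).re with ha_def
  have ha_anti : ∀ x : H, Antitone fun n => a n x := by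
    intro x
    refine antitone_nat_of_succ_le fun n => ?_
    have h1 := (hstep n)
    rw [ContinuousLinearMap.le_def] at h1
    have h2 := h1.inner_nonneg_left x
    simp only [ContinuousLinearMap.reApplyInnerSelf_apply, ContinuousLinearMap.sub_apply,
      inner_sub_left, map_sub] at h2
    simp only [ha_def, RCLike.re_to_complex] at h2 ⊢
    have h3 := (Complex.nonneg_iff.mp h2).1
    rw [Complex.sub_re] at h3
    linarith [h3]
  have ha_nonneg : ∀ n (x : H), 0 ≤ a n x := by
    intro n x
    have := (hpos_it n)
    rw [ContinuousLinearMap.nonneg_iff_isPositive] at this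
    have h2 := this.inner_nonneg_left x
    exact (Complex.nonneg_iff.mp h2).1
  have ha_conv : ∀ x : H, ∃ l : ℝ, Tendsto (fun n => a n x) atTop (nhds l) := by
    intro x
    exact ⟨_, tendsto_atTop_ciInf (ha_anti x) ⟨0, fun r ⟨n, hn⟩ => hn ▸ ha_nonneg n x⟩⟩
  -- the vector sequences are Cauchy
  have key : ∀ (m n : ℕ), m ≤ n → ∀ x : H,
      ‖(Φ^[m] Q) x - (Φ^[n] Q) x‖ ^ 2 ≤ (2 * ‖Q‖ + 1) * (a m x - a n x) := by
    intro m n hmn x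
    set D := Φ^[m] Q - Φ^[n] Q with hD
    have hDpos : (0 : H →L[ℂ] H) ≤ D := sub_nonneg.mpr (hanti hmn)
    have hDnorm : ‖D‖ ≤ 2 * ‖Q‖ + 1 := by
      have := norm_sub_le (Φ^[m] Q) (Φ^[n] Q)
      have h1 := hnorm m; have h2 := hnorm n
      calc ‖D‖ ≤ ‖Φ^[m] Q‖ + ‖Φ^[n] Q‖ := this
        _ ≤ 2 * ‖Q‖ + 1 := by linarith
    have hcs := pos_norm_apply_sq_le D hDpos x
    have hre : (inner ℂ (D x) x : ℂ).re = a m x - a n x := by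
      simp [hD, ContinuousLinearMap.sub_apply, inner_sub_left, ha_def]
    rw [hre] at hcs
    have hre_nonneg : 0 ≤ a m x - a n x := by
      have := ha_anti x hmn; linarith
    calc ‖D x‖ ^ 2 ≤ ‖D‖ * (a m x - a n x) := hcs
      _ ≤ (2 * ‖Q‖ + 1) * (a m x - a n x) :=
          mul_le_mul_of_nonneg_right hDnorm hre_nonneg
  have hCauchy : ∀ x : H, CauchySeq fun n => (Φ^[n] Q) x := by
    intro x
    obtain ⟨l, hl⟩ := ha_conv x
    have hge : ∀ n, l ≤ a n x := fun n => (ha_anti x).le_of_tendsto hl n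
    rw [Metric.cauchySeq_iff']
    intro ε hε
    have hC : 0 < 2 * ‖Q‖ + 1 := by positivity
    have hδ : 0 < ε ^ 2 / (2 * ‖Q‖ + 1) := by positivity
    have := (Metric.tendsto_atTop.mp hl) (ε ^ 2 / (2 * ‖Q‖ + 1)) hδ
    obtain ⟨N, hN⟩ := this
    refine ⟨N, fun n hn => ?_⟩
    have h1 := key N n hn x
    have h2 : a N x - a n x < ε ^ 2 / (2 * ‖Q‖ + 1) := by
      have hNN := hN N le_rfl
      rw [Real.dist_eq, abs_lt] at hNN
      have := hge n
      linarith [hNN.2]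
    have h3 : ‖(Φ^[N] Q) x - (Φ^[n] Q) x‖ ^ 2 < ε ^ 2 := by
      calc ‖(Φ^[N] Q) x - (Φ^[n] Q) x‖ ^ 2 ≤ (2 * ‖Q‖ + 1) * (a N x - a n x) := h1
        _ < (2 * ‖Q‖ + 1) * (ε ^ 2 / (2 * ‖Q‖ + 1)) := by
            exact mul_lt_mul_of_pos_left h2 hC
        _ = ε ^ 2 := by field_simp
    rw [dist_eq_norm, ← norm_neg, neg_sub]
    exact lt_of_pow_lt_pow_left₀ 2 hε.le h3
  have hvec : ∀ x : H, ∃ y : H, Tendsto (fun n => (Φ^[n] Q) x) atTop (nhds y) := fun x =>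
    cauchySeq_tendsto_of_complete (hCauchy x)
  choose f hf using hvec
  -- f is linear and bounded
  have hf_add : ∀ x y : H, f (x + y) = f x + f y := by
    intro x y
    refine tendsto_nhds_unique ?_ ((hf x).add (hf y))
    simpa [map_add] using hf (x + y)
  have hf_smul : ∀ (c : ℂ) (x : H), f (c • x) = c • f x := by
    intro c x
    refine tendsto_nhds_unique ?_ ((hf x).const_smul c)
    simpa [map_smul] using hf (c • x)
  have hf_bound : ∀ x : H, ‖f x‖ ≤ ‖Q‖ * ‖x‖ := by
    intro x
    refine le_of_tendsto ((hf x).norm) (Filter.Eventually.of_forall fun n => ?_)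
    calc ‖(Φ^[n] Q) x‖ ≤ ‖Φ^[n] Q‖ * ‖x‖ := (Φ^[n] Q).le_opNorm x
      _ ≤ ‖Q‖ * ‖x‖ := mul_le_mul_of_nonneg_right (hnorm n) (norm_nonneg x)
  set Qh : H →L[ℂ] H := LinearMap.mkContinuous
    { toFun := f
      map_add' := hf_add
      map_smul' := hf_smul } ‖Q‖ hf_bound with hQh_def
  have hQh_apply : ∀ x : H, Qh x = f x := fun x => rfl
  -- WOT convergence of iterates to Qh
  have hinner : ∀ x y : H, Tendsto (fun n => (inner ℂ ((Φ^[n] Q) x) y : ℂ)) atTop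
      (nhds (inner ℂ (Qh x) y)) := by
    intro x y
    rw [hQh_apply]
    exact Tendsto.inner (hf x) tendsto_const_nhds
  -- Qh is positive
  have hQh_pos : Qh.IsPositive :=
    isPositive_of_wot_limit Qh _ (fun n =>
      (ContinuousLinearMap.nonneg_iff_isPositive _).mp (hpos_it n)) (fun x => hinner x x)
  -- Q - Qh is positive
  have hQmQh_pos : (Q - Qh).IsPositive := by
    refine isPositive_of_wot_limit _ (fun n => Q - Φ^[n] Q) (fun n =>
      (ContinuousLinearMap.le_def _ _).mp (hleQ n)) fun x => ?_
    simp only [ContinuousLinearMap.sub_apply, inner_sub_left]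
    exact Tendsto.sub tendsto_const_nhds (hinner x x)
  -- Qh is harmonic
  have hQh_harm : Φ Qh = Qh := by
    have h1 : ∀ x y : H, Tendsto (fun n => (inner ℂ ((Φ (Φ^[n] Q)) x) y : ℂ)) atTop
        (nhds (inner ℂ ((Φ Qh) x) y)) := hnormal _ Qh ‖Q‖ hnorm hinner
    have h2 : ∀ x y : H, Tendsto (fun n => (inner ℂ ((Φ (Φ^[n] Q)) x) y : ℂ)) atTop
        (nhds (inner ℂ (Qh x) y)) := by
      intro x y
      have := (hinner x y).comp (tendsto_add_atTop_nat 1)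
      simpa [Function.comp_def, Function.iterate_succ_apply'] using this
    ext x
    refine ext_inner_right ℂ fun y => ?_
    exact tendsto_nhds_unique (h1 x y) (h2 x y)
  have hQh_it : ∀ n, Φ^[n] Qh = Qh := by
    intro n
    induction n with
    | zero => rfl
    | succ n ih => rw [Function.iterate_succ_apply', ih, hQh_harm]
  -- iterates of Φ respect subtraction
  have hit_sub : ∀ (n : ℕ) (A B : H →L[ℂ] H), Φ^[n] (A - B) = Φ^[n] A - Φ^[n] B := by
    intro n
    induction n with
    | zero => intro A B; rfl
    | succ n ih =>
        intro A B
        rw [Function.iterate_succ_apply', Function.iterate_succ_apply',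
          Function.iterate_succ_apply', ih, map_sub]
  have hit_add : ∀ (n : ℕ) (A B : H →L[ℂ] H), Φ^[n] (A + B) = Φ^[n] A + Φ^[n] B := by
    intro n
    induction n with
    | zero => intro A B; rfl
    | succ n ih =>
        intro A B
        rw [Function.iterate_succ_apply', Function.iterate_succ_apply',
          Function.iterate_succ_apply', ih, map_add]
  -- the pure part
  set Qp : H →L[ℂ] H := Q - Qh with hQp_def
  have hQp_sot : SOTLimZero fun n => Φ^[n] Qp := by
    intro x
    have : ∀ n, (Φ^[n] Qp) x = (Φ^[n] Q) x - Qh x := by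
      intro n
      rw [hQp_def, hit_sub, hQh_it]
      rfl
    simp only [this, hQh_apply]
    have h0 := (hf x).sub (tendsto_const_nhds (α := ℕ) (x := f x))
    simpa using h0
  have hQp_sup : Superharmonic ⇑Φ Qp := by
    constructor
    · exact hQmQh_pos
    · have : Qp - Φ Qp = Q - Φ Q := by
        rw [hQp_def, map_sub, hQh_harm]; abel
      rw [this]; exact hQsup
  refine ⟨(Qp, Qh), ⟨by simp [hQp_def], ⟨hQp_sup, hQp_sot⟩, hQh_pos, hQh_harm⟩, ?_⟩
  -- uniqueness
  rintro ⟨p1, p2⟩ ⟨hsum, ⟨hp1sup, hp1sot⟩, hp2pos, hp2harm⟩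
  have hp2_it : ∀ n, Φ^[n] p2 = p2 := by
    intro n
    induction n with
    | zero => rfl
    | succ n ih => rw [Function.iterate_succ_apply', ih, hp2harm]
  have hp2_eq : p2 = Qh := by
    ext x
    refine tendsto_nhds_unique ?_ (by rw [hQh_apply]; exact hf x)
    have : ∀ n, (Φ^[n] Q) x = (Φ^[n] p1) x + p2 x := by
      intro n
      rw [hsum, hit_add, hp2_it]
      rfl
    simp only [this]
    have := (hp1sot x).add (tendsto_const_nhds (α := ℕ) (x := p2 x))
    simpa using this
  have hp1_eq : p1 = Qp := by
    rw [hQp_def, ← hp2_eq, hsum]; abel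
  simp [hp1_eq, hp2_eq]
end

section
/- Let H be a complex Hilbert space, let Φ : B(H) → B(H) be a positive linear map which is normal on bounded sequences, let k ≥ 1 be a natural number, and let Q ∈ B(H) be pure superharmonic for the k-th iterate Φᵏ (i.e., Q ≥ 0, Φᵏ(Q) ≤ Q, and Φᵏⁿ(Q) → 0 in the strong operator topology as n → ∞). Then the operator R := Q + Φ(Q) + ⋯ + Φ^{k−1}(Q) satisfies Q ≤ R, and R is pure superharmonic for Φ: Φ(R) ≤ R and Φⁿ(R) → 0 in the strong operator topology as n → ∞. -/
open Filter

open ContinuousLinearMap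

set_option synthInstance.maxHeartbeats 1000000
set_option maxHeartbeats 1000000

lemma norm_apply_sq_le' {H : Type*} [NormedAddCommGroup H] [InnerProductSpace ℂ H]
    [CompleteSpace H] (A : H →L[ℂ] H) (hA : 0 ≤ A) (x : H) :
    ‖A x‖ ^ 2 ≤ ‖A‖ * (inner ℂ (A x) x : ℂ).re := by
  set S := CFC.sqrt A with hSdef
  have hS : 0 ≤ S := CFC.sqrt_nonneg (a := A)
  have hSS : S * S = A := CFC.sqrt_mul_sqrt_self A hA
  have hsa : IsSelfAdjoint S := ((nonneg_iff_isPositive S).1 hS).isSelfAdjoint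
  have hsym := isSelfAdjoint_iff_isSymmetric.mp hsa
  have h1 : A x = S (S x) := by rw [← hSS]; rfl
  have h2 : ‖S x‖ ^ 2 = (inner ℂ (A x) x : ℂ).re := by
    have h4 : (inner ℂ (S (S x)) x : ℂ) = inner ℂ (S x) (S x) := hsym (S x) x
    rw [← RCLike.re_to_complex, h1, h4, inner_self_eq_norm_sq]
  have h3 : ‖S‖ ^ 2 = ‖A‖ := by
    have h := CStarRing.norm_star_mul_self (x := S)
    rw [hsa.star_eq] at h
    rw [← hSS, h, sq]
  calc ‖A x‖ ^ 2 = ‖S (S x)‖ ^ 2 := by rw [h1]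
    _ ≤ (‖S‖ * ‖S x‖) ^ 2 := pow_le_pow_left₀ (norm_nonneg _) (S.le_opNorm (S x)) 2
    _ = ‖A‖ * (inner ℂ (A x) x : ℂ).re := by rw [mul_pow, h2, h3]

/-- If `Q` is pure superharmonic for the `k`-th iterate `Φᵏ`, then
`R = Q + Φ(Q) + ⋯ + Φ^{k-1}(Q)` dominates `Q` and is pure superharmonic for `Φ`. -/
theorem pure_superharmonic_of_iterate
    {H : Type*} [NormedAddCommGroup H] [InnerProductSpace ℂ H] [CompleteSpace H]
    (Φ : (H →L[ℂ] H) →ₗ[ℂ] (H →L[ℂ] H))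
    (hpos : ∀ x : H →L[ℂ] H, x.IsPositive → (Φ x).IsPositive)
    (hnormal : NormalOnBddSeq ⇑Φ)
    (k : ℕ) (hk : 1 ≤ k) (Q : H →L[ℂ] H)
    (hQ : PureSuperharmonic ((⇑Φ)^[k]) Q) :
    ((∑ j ∈ Finset.range k, (⇑Φ)^[j] Q) - Q).IsPositive ∧
      PureSuperharmonic ⇑Φ (∑ j ∈ Finset.range k, (⇑Φ)^[j] Q) := by
  classical
  set R := ∑ j ∈ Finset.range k, (⇑Φ)^[j] Q with hR
  have hΦmono : Monotone ⇑Φ := fun a b hab => by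
    rw [ContinuousLinearMap.le_def] at hab ⊢
    rw [← map_sub]
    exact hpos _ hab
  have hmono : ∀ j, Monotone ((⇑Φ)^[j]) := fun j => hΦmono.iterate j
  have hΦ0 : ∀ j, (⇑Φ)^[j] (0 : H →L[ℂ] H) = 0 := fun j =>
    Function.iterate_fixed (map_zero Φ) j
  have hQ0 : (0 : H →L[ℂ] H) ≤ Q := (nonneg_iff_isPositive Q).2 hQ.1.1
  have hQk : (⇑Φ)^[k] Q ≤ Q := (le_def _ _).2 hQ.1.2
  have hjQ : ∀ j, (0 : H →L[ℂ] H) ≤ (⇑Φ)^[j] Q := fun j => by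
    have := hmono j hQ0
    rwa [hΦ0 j] at this
  have hR0 : 0 ≤ R := Finset.sum_nonneg fun j _ => hjQ j
  have hQR : Q ≤ R := by
    have := Finset.single_le_sum (f := fun j => (⇑Φ)^[j] Q) (fun j _ => hjQ j)
      (Finset.mem_range.2 (by omega) : 0 ∈ Finset.range k)
    simpa [hR] using this
  have hiter_sum : ∀ (m : ℕ) (s : Finset ℕ) (f : ℕ → H →L[ℂ] H),
      (⇑Φ)^[m] (∑ j ∈ s, f j) = ∑ j ∈ s, (⇑Φ)^[m] (f j) := by
    intro m s f
    simp only [← Module.End.pow_apply, map_sum]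
  have hΦR : Φ R ≤ R := by
    have h1 : Φ R = ∑ j ∈ Finset.range k, (⇑Φ)^[j + 1] Q := by
      rw [hR, map_sum]
      exact Finset.sum_congr rfl fun j _ => (Function.iterate_succ_apply' ⇑Φ j Q).symm
    rw [ContinuousLinearMap.le_def, hR, h1, ← Finset.sum_sub_distrib,
      Finset.sum_range_sub' (fun j => (⇑Φ)^[j] Q)]
    simpa using hQ.1.2
  have hRpow : ∀ n, (⇑Φ)^[n] R ≤ R := by
    intro n
    induction n with
    | zero => simp
    | succ n ih =>
      calc (⇑Φ)^[n + 1] R = (⇑Φ)^[n] (Φ R) := Function.iterate_succ_apply ⇑Φ n R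
        _ ≤ (⇑Φ)^[n] R := hmono n hΦR
        _ ≤ R := ih
  have hRpow0 : ∀ n, 0 ≤ (⇑Φ)^[n] R := fun n => by
    have := hmono n hR0
    rwa [hΦ0 n] at this
  have hQpow : ∀ n, ((⇑Φ)^[k])^[n] Q ≤ Q := by
    intro n
    induction n with
    | zero => simp
    | succ n ih =>
      calc ((⇑Φ)^[k])^[n + 1] Q = ((⇑Φ)^[k])^[n] ((⇑Φ)^[k] Q) :=
            Function.iterate_succ_apply _ n Q
        _ ≤ ((⇑Φ)^[k])^[n] Q := (hmono k).iterate n hQk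
        _ ≤ Q := ih
  have hQpow0 : ∀ n, (0 : H →L[ℂ] H) ≤ ((⇑Φ)^[k])^[n] Q := fun n => by
    have := (hmono k).iterate n hQ0
    rwa [Function.iterate_fixed (hΦ0 k) n] at this
  -- WOT convergence of Φ^[j]((Φᵏ)ⁿ Q) to 0
  have hWOT : ∀ (j : ℕ) (x y : H),
      Tendsto (fun n => (inner ℂ ((⇑Φ)^[j] (((⇑Φ)^[k])^[n] Q) x) y : ℂ)) atTop (nhds 0) := by
    intro j
    induction j with
    | zero =>
      intro x y
      have := Filter.Tendsto.inner (𝕜 := ℂ) (hQ.2 x) (tendsto_const_nhds (x := y))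
      simpa using this
    | succ j ih =>
      have hb : ∀ n, ‖(⇑Φ)^[j] (((⇑Φ)^[k])^[n] Q)‖ ≤ ‖(⇑Φ)^[j] Q‖ := by
        intro n
        have h0 : 0 ≤ (⇑Φ)^[j] (((⇑Φ)^[k])^[n] Q) := by
          have := hmono j (hQpow0 n)
          rwa [hΦ0 j] at this
        exact CStarAlgebra.norm_le_norm_of_nonneg_of_le h0 (hmono j (hQpow n))
      intro x y
      have hin : ∀ x y : H,
          Tendsto (fun n => (inner ℂ ((⇑Φ)^[j] (((⇑Φ)^[k])^[n] Q) x) y : ℂ)) atTop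
            (nhds (inner ℂ ((0 : H →L[ℂ] H) x) y)) := by
        intro x y
        simpa using ih x y
      have happ := hnormal (fun n => (⇑Φ)^[j] (((⇑Φ)^[k])^[n] Q)) 0 ‖(⇑Φ)^[j] Q‖ hb hin x y
      simp only [map_zero, zero_apply, inner_zero_left] at happ
      refine happ.congr fun n => ?_
      rw [← Function.iterate_succ_apply' ⇑Φ j]
  -- quadratic form along multiples of k tends to 0
  have hbmul : ∀ x : H,
      Tendsto (fun n => (inner ℂ ((⇑Φ)^[k * n] R x) x : ℂ).re) atTop (nhds 0) := by
    intro x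
    have h1 : ∀ n, (⇑Φ)^[k * n] R = ∑ j ∈ Finset.range k, (⇑Φ)^[j] (((⇑Φ)^[k])^[n] Q) := by
      intro n
      rw [hR, hiter_sum]
      refine Finset.sum_congr rfl fun j _ => ?_
      rw [← Function.iterate_mul, ← Function.iterate_add_apply, ← Function.iterate_add_apply,
        Nat.add_comm]
    have h2 : Tendsto (fun n => (inner ℂ ((⇑Φ)^[k * n] R x) x : ℂ)) atTop (nhds 0) := by
      have hs := tendsto_finset_sum (Finset.range k) (fun j _ => hWOT j x x)
      rw [Finset.sum_const_zero] at hs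
      refine hs.congr fun n => ?_
      rw [h1 n]
      simp [ContinuousLinearMap.sum_apply, sum_inner]
    have := (Complex.continuous_re.tendsto 0).comp h2
    exact this
  -- full quadratic form tends to 0 (antitone + subsequence)
  have hq : ∀ x : H,
      Tendsto (fun n => (inner ℂ ((⇑Φ)^[n] R x) x : ℂ).re) atTop (nhds 0) := by
    intro x
    set a : ℕ → ℝ := fun n => (inner ℂ ((⇑Φ)^[n] R x) x : ℂ).re with ha
    have hnn : ∀ n, 0 ≤ a n := fun n => by
      have := ((nonneg_iff_isPositive _).1 (hRpow0 n)).inner_nonneg_left x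
      simpa [ha] using (Complex.nonneg_iff.mp this).1
    have hanti : Antitone a := by
      refine antitone_nat_of_succ_le fun n => ?_
      have hle : (⇑Φ)^[n + 1] R ≤ (⇑Φ)^[n] R := by
        rw [Function.iterate_succ_apply]
        exact hmono n hΦR
      rw [ContinuousLinearMap.le_def] at hle
      have h := hle.inner_nonneg_left x
      simp only [sub_apply, inner_sub_left, map_sub] at h
      have : (inner ℂ ((⇑Φ)^[n + 1] R x) x : ℂ).re ≤ (inner ℂ ((⇑Φ)^[n] R x) x : ℂ).re := by
        have h' := h
        have h'' := (Complex.nonneg_iff.mp h').1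
        simp only [Complex.sub_re] at h''
        linarith [h'']
      simpa [ha] using this
    have hdiv : Tendsto (fun m : ℕ => m / k) atTop atTop := by
      refine tendsto_atTop_atTop.2 fun b => ⟨k * b, fun m hm => ?_⟩
      refine (Nat.le_div_iff_mul_le (by omega)).2 ?_
      calc b * k = k * b := Nat.mul_comm _ _
        _ ≤ m := hm
    have hcomp : Tendsto (fun m : ℕ => a (k * (m / k))) atTop (nhds 0) :=
      (hbmul x).comp hdiv
    refine squeeze_zero hnn (fun m => hanti ?_) hcomp
    calc k * (m / k) = m / k * k := Nat.mul_comm _ _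
      _ ≤ m := Nat.div_mul_le_self m k
  -- SOT convergence
  have hSOT : SOTLimZero fun n => (⇑Φ)^[n] R := by
    intro x
    rw [tendsto_zero_iff_norm_tendsto_zero]
    have hnn : ∀ n, (0 : ℝ) ≤ (inner ℂ ((⇑Φ)^[n] R x) x : ℂ).re := fun n => by
      have := ((nonneg_iff_isPositive _).1 (hRpow0 n)).inner_nonneg_left x
      simpa using (Complex.nonneg_iff.mp this).1
    have hsq : ∀ n, ‖(⇑Φ)^[n] R x‖ ^ 2 ≤ ‖R‖ * (inner ℂ ((⇑Φ)^[n] R x) x : ℂ).re := by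
      intro n
      refine (norm_apply_sq_le' _ (hRpow0 n) x).trans ?_
      exact mul_le_mul_of_nonneg_right
        (CStarAlgebra.norm_le_norm_of_nonneg_of_le (hRpow0 n) (hRpow n)) (hnn n)
    have h2 : Tendsto (fun n => ‖(⇑Φ)^[n] R x‖ ^ 2) atTop (nhds 0) := by
      refine squeeze_zero (fun n => sq_nonneg _) hsq ?_
      have := (hq x).const_mul ‖R‖
      simpa using this
    have h3 := (Real.continuous_sqrt.tendsto 0).comp h2
    simp only [Real.sqrt_zero] at h3
    refine h3.congr fun n => ?_
    simp only [Function.comp_apply]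
    exact Real.sqrt_sq (norm_nonneg _)
  exact ⟨(le_def Q R).1 hQR,
    ⟨⟨(nonneg_iff_isPositive R).1 hR0, (le_def _ _).1 hΦR⟩, hSOT⟩⟩
end

section
/- Let H be a complex Hilbert space, let Φ : B(H) → B(H) be a positive linear map, let k ≥ 1 be a natural number, and let ξ ∈ H be a vector whose associated vector state is periodic of period dividing k, i.e., ⟨Φᵏ(x)ξ, ξ⟩ = ⟨xξ, ξ⟩ for every x ∈ B(H). If Q ∈ B(H) is pure superharmonic for Φ, then Qξ = 0. In particular, the range of every pure superharmonic operator for Φ is orthogonal to ξ. -/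
open Filter

lemma aux_pos_inner_zero {H : Type*} [NormedAddCommGroup H] [InnerProductSpace ℂ H]
    [CompleteSpace H] (Q : H →L[ℂ] H) (hQ : Q.IsPositive) (ξ : H)
    (h : (inner ℂ (Q ξ) ξ : ℂ) = 0) : Q ξ = 0 := by
  have hsym := hQ.1
  set a : ℝ := ‖Q ξ‖ ^ 2 with ha
  set C : ℝ := RCLike.re (inner ℂ (Q (Q ξ)) (Q ξ) : ℂ) with hC
  have hCpos : 0 ≤ C := (RCLike.nonneg_iff.mp (hQ.inner_nonneg_left (Q ξ))).1
  have key : ∀ t : ℝ, 0 ≤ C * t ^ 2 + (2 * a) * t + 0 := by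
    intro t
    have h0 := (RCLike.nonneg_iff.mp (hQ.inner_nonneg_left (ξ + (t : ℂ) • Q ξ))).1
    have hxy : (inner ℂ (Q (Q ξ)) ξ : ℂ) = inner ℂ (Q ξ) (Q ξ) := by
      exact hsym (Q ξ) ξ
    have expand : (inner ℂ (Q (ξ + (t : ℂ) • Q ξ)) (ξ + (t : ℂ) • Q ξ) : ℂ)
        = (t : ℂ) * (inner ℂ (Q ξ) (Q ξ)) + (t : ℂ) * (inner ℂ (Q ξ) (Q ξ))
          + (t : ℂ) * (t : ℂ) * inner ℂ (Q (Q ξ)) (Q ξ) := by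
      simp only [map_add, map_smul, inner_add_left, inner_add_right, inner_smul_left,
        inner_smul_right, h, hxy, Complex.conj_ofReal, mul_zero, zero_add, add_zero, zero_mul]
      ring
    rw [expand] at h0
    have hre : RCLike.re ((t : ℂ) * (inner ℂ (Q ξ) (Q ξ)) + (t : ℂ) * (inner ℂ (Q ξ) (Q ξ))
          + (t : ℂ) * (t : ℂ) * inner ℂ (Q (Q ξ)) (Q ξ) : ℂ)
        = t * a + t * a + t * (t * C) := by
      simp only [RCLike.re_to_complex, Complex.add_re, Complex.re_ofReal_mul, mul_assoc]
      have : (inner ℂ (Q ξ) (Q ξ) : ℂ).re = a := by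
        rw [ha]
        exact_mod_cast @inner_self_eq_norm_sq ℂ _ _ _ _ (Q ξ)
      rw [this, hC, RCLike.re_to_complex]
    rw [hre] at h0
    nlinarith [h0]
  have key' : ∀ t : ℝ, 0 ≤ C * (t * t) + (2 * a) * t + 0 := by
    intro t; have := key t; nlinarith [this]
  have hdisc := discrim_le_zero key'
  have ha2 : a = 0 := by
    rw [discrim] at hdisc
    nlinarith [sq_nonneg a, hdisc]
  have : ‖Q ξ‖ = 0 := by
    have := ha ▸ ha2
    nlinarith [norm_nonneg (Q ξ)]
  simpa using this

/-- If the vector state of `ξ` is periodic of period dividing `k` for the positive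
linear map `Φ`, then every pure superharmonic operator for `Φ` kills `ξ`. -/
theorem pure_superharmonic_vanishes_on_periodic_vector
    {H : Type*} [NormedAddCommGroup H] [InnerProductSpace ℂ H] [CompleteSpace H]
    (Φ : (H →L[ℂ] H) →ₗ[ℂ] (H →L[ℂ] H))
    (hpos : ∀ x : H →L[ℂ] H, x.IsPositive → (Φ x).IsPositive)
    (k : ℕ) (hk : 1 ≤ k) (ξ : H)
    (hper : ∀ x : H →L[ℂ] H, (inner ℂ (((⇑Φ)^[k] x) ξ) ξ : ℂ) = inner ℂ (x ξ) ξ)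
    (Q : H →L[ℂ] H) (hQ : PureSuperharmonic ⇑Φ Q) :
    Q ξ = 0 := by
  have hQpos : Q.IsPositive := hQ.1.1
  have hlim : ∀ x : H, Filter.Tendsto (fun n => ((⇑Φ)^[n] Q) x) atTop (nhds 0) := hQ.2
  have hconst : ∀ n : ℕ, (inner ℂ (((⇑Φ)^[n * k] Q) ξ) ξ : ℂ) = inner ℂ (Q ξ) ξ := by
    intro n
    induction n with
    | zero => simp
    | succ n ih =>
      have hnk : (n + 1) * k = k + n * k := by ring
      rw [hnk, Function.iterate_add_apply, hper, ih]
  have hmono : Tendsto (fun n : ℕ => n * k) atTop atTop :=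
    tendsto_atTop_mono (fun n => Nat.le_mul_of_pos_right n hk) tendsto_id
  have h1 : Tendsto (fun n => ((⇑Φ)^[n * k] Q) ξ) atTop (nhds 0) := (hlim ξ).comp hmono
  have h2 : Tendsto (fun n => (inner ℂ (((⇑Φ)^[n * k] Q) ξ) ξ : ℂ)) atTop (nhds 0) := by
    simpa using h1.inner (tendsto_const_nhds (x := ξ))
  have h3 : (inner ℂ (Q ξ) ξ : ℂ) = 0 := by
    refine tendsto_nhds_unique ?_ h2
    simp only [hconst]
    exact tendsto_const_nhds
  exact aux_pos_inner_zero Q hQpos ξ h3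
end

section
/- Let T = (T₁, …, T_d) be a d-tuple of bounded operators on a complex Hilbert space H with ∑ᵢ Tᵢ Tᵢ* ≤ c·1 for some real number c < 1 (a strict row contraction), let V = (V₁, …, V_d) be a row isometry on a complex Hilbert space K, and let C : H → K be a bounded operator satisfying C Tᵢ = Vᵢ C for every i. Then C = 0. -/
open Filter ContinuousLinearMap
open scoped ComplexInnerProductSpace

/-- If `T` is a strict row contraction, `V` is a row isometry, and `C` intertwines
`T` with `V` (i.e. `C Tᵢ = Vᵢ C` for all `i`), then `C = 0`. -/
theorem no_intertwiner_from_strict_row_contraction_to_row_isometry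
    {H : Type*} [NormedAddCommGroup H] [InnerProductSpace ℂ H] [CompleteSpace H]
    {K : Type*} [NormedAddCommGroup K] [InnerProductSpace ℂ K] [CompleteSpace K]
    {d : ℕ} (hd : 1 ≤ d)
    (T : Fin d → H →L[ℂ] H) (c : ℝ) (hc : c < 1)
    (hT : ((c : ℂ) • (1 : H →L[ℂ] H) - ∑ i, T i ∘L adjoint (T i)).IsPositive)
    (V : Fin d → K →L[ℂ] K)
    (hV : ∀ i j, adjoint (V i) ∘L V j = if i = j then 1 else 0)
    (C : H →L[ℂ] K) (hC : ∀ i, C ∘L T i = V i ∘L C) :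
    C = 0 := by
  have hd0 : 0 < d := hd
  set i0 : Fin d := ⟨0, hd0⟩ with hi0
  set c' : ℝ := max c 0 with hc'def
  have hc'0 : 0 ≤ c' := le_max_right _ _
  have hc'1 : c' < 1 := max_lt hc one_pos
  -- the isometry `V i0` preserves norms
  have hViso : ∀ y : K, ‖V i0 y‖ = ‖y‖ := by
    refine (norm_map_iff_adjoint_comp_self (V i0)).mpr ?_
    simpa using hV i0 i0
  -- norm bound on `adjoint (T i0)`
  have hTa : ∀ x : H, ‖adjoint (T i0) x‖ ^ 2 ≤ c' * ‖x‖ ^ 2 := by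
    intro x
    have h1 := hT.2 x
    rw [ContinuousLinearMap.reApplyInnerSelf_apply] at h1
    have h2 : (((c : ℂ) • (1 : H →L[ℂ] H) - ∑ i, T i ∘L adjoint (T i)) x)
        = (c : ℂ) • x - ∑ i, T i (adjoint (T i) x) := by
      simp [ContinuousLinearMap.sub_apply, ContinuousLinearMap.sum_apply]
    rw [h2] at h1
    have h3 : ∀ i : Fin d, (inner ℂ (T i (adjoint (T i) x)) x : ℂ)
        = ((‖adjoint (T i) x‖ ^ 2 : ℝ) : ℂ) := by
      intro i
      have := ContinuousLinearMap.adjoint_inner_left (adjoint (T i)) x (adjoint (T i) x)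
      rw [adjoint_adjoint] at this
      rw [this, inner_self_eq_norm_sq_to_K]
      norm_num
    have h4 : Complex.re (inner ℂ ((c : ℂ) • x - ∑ i, T i (adjoint (T i) x)) x : ℂ)
        = c * ‖x‖ ^ 2 - ∑ i, ‖adjoint (T i) x‖ ^ 2 := by
      rw [inner_sub_left, inner_smul_left, sum_inner]
      simp only [h3]
      rw [inner_self_eq_norm_sq_to_K]
      simp [← Complex.ofReal_pow]
    have h1' : 0 ≤ (inner ℂ ((c : ℂ) • x - ∑ i, T i (adjoint (T i) x)) x : ℂ).re := h1
    rw [h4] at h1'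
    have h5 : ∑ i, ‖adjoint (T i) x‖ ^ 2 ≤ c * ‖x‖ ^ 2 := by linarith [h1']
    have h6 : ‖adjoint (T i0) x‖ ^ 2 ≤ ∑ i, ‖adjoint (T i) x‖ ^ 2 :=
      Finset.single_le_sum (f := fun i => ‖adjoint (T i) x‖ ^ 2)
        (fun i _ => sq_nonneg _) (Finset.mem_univ i0)
    have hcc' : c * ‖x‖ ^ 2 ≤ c' * ‖x‖ ^ 2 :=
      mul_le_mul_of_nonneg_right (le_max_left _ _) (sq_nonneg _)
    linarith
  -- hence `‖T i0 x‖ ≤ √c' * ‖x‖`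
  have hTnorm : ‖T i0‖ ≤ Real.sqrt c' := by
    have hadj : ‖adjoint (T i0)‖ ≤ Real.sqrt c' := by
      refine opNorm_le_bound _ (Real.sqrt_nonneg _) fun x => ?_
      have := hTa x
      calc ‖adjoint (T i0) x‖ = Real.sqrt (‖adjoint (T i0) x‖ ^ 2) := by
            rw [Real.sqrt_sq (norm_nonneg _)]
        _ ≤ Real.sqrt (c' * ‖x‖ ^ 2) := Real.sqrt_le_sqrt this
        _ = Real.sqrt c' * ‖x‖ := by
            rw [Real.sqrt_mul hc'0, Real.sqrt_sq (norm_nonneg _)]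
    calc ‖T i0‖ = ‖adjoint (adjoint (T i0))‖ := by rw [adjoint_adjoint]
      _ = ‖adjoint (T i0)‖ := (ContinuousLinearMap.adjoint).norm_map _
      _ ≤ Real.sqrt c' := hadj
  have hTx : ∀ x : H, ‖T i0 x‖ ≤ Real.sqrt c' * ‖x‖ := fun x =>
    (le_opNorm _ x).trans (mul_le_mul_of_nonneg_right hTnorm (norm_nonneg _))
  -- iterated intertwining
  have hCn : ∀ n : ℕ, C ∘L ((T i0) ^ n) = ((V i0) ^ n) ∘L C := by
    intro n
    induction n with
    | zero =>
      ext x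
      simp [ContinuousLinearMap.one_def]
    | succ n ih =>
      ext x
      have ih' := ContinuousLinearMap.ext_iff.mp ih (T i0 x)
      have hc2 := ContinuousLinearMap.ext_iff.mp (hC i0) x
      simp only [ContinuousLinearMap.comp_apply] at ih' hc2 ⊢
      rw [pow_succ, pow_succ]
      simp only [ContinuousLinearMap.mul_apply]
      rw [ih', hc2]
  -- `(V i0)^n` is isometric
  have hVn : ∀ (n : ℕ) (y : K), ‖((V i0) ^ n) y‖ = ‖y‖ := by
    intro n
    induction n with
    | zero => simp
    | succ n ih =>
      intro y
      rw [pow_succ']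
      calc ‖(V i0 * (V i0) ^ n) y‖ = ‖V i0 (((V i0) ^ n) y)‖ := rfl
        _ = ‖((V i0) ^ n) y‖ := hViso _
        _ = ‖y‖ := ih y
  -- powers of `T i0` shrink
  have hTn : ∀ (n : ℕ) (x : H), ‖((T i0) ^ n) x‖ ≤ Real.sqrt c' ^ n * ‖x‖ := by
    intro n
    induction n with
    | zero => simp
    | succ n ih =>
      intro x
      rw [pow_succ]
      calc ‖((T i0) ^ n * T i0) x‖ = ‖((T i0) ^ n) (T i0 x)‖ := rfl
        _ ≤ Real.sqrt c' ^ n * ‖T i0 x‖ := ih _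
        _ ≤ Real.sqrt c' ^ n * (Real.sqrt c' * ‖x‖) :=
            mul_le_mul_of_nonneg_left (hTx x) (pow_nonneg (Real.sqrt_nonneg _) _)
        _ = Real.sqrt c' ^ (n + 1) * ‖x‖ := by ring
  ext h
  simp only [ContinuousLinearMap.zero_apply]
  rw [← norm_le_zero_iff]
  have key : ∀ n : ℕ, ‖C h‖ ≤ ‖C‖ * ‖h‖ * Real.sqrt c' ^ n := by
    intro n
    calc ‖C h‖ = ‖((V i0) ^ n) (C h)‖ := (hVn n (C h)).symm
      _ = ‖(((V i0) ^ n) ∘L C) h‖ := rfl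
      _ = ‖(C ∘L ((T i0) ^ n)) h‖ := by rw [← hCn n]
      _ = ‖C (((T i0) ^ n) h)‖ := rfl
      _ ≤ ‖C‖ * ‖((T i0) ^ n) h‖ := le_opNorm _ _
      _ ≤ ‖C‖ * (Real.sqrt c' ^ n * ‖h‖) :=
          mul_le_mul_of_nonneg_left (hTn n h) (norm_nonneg _)
      _ = ‖C‖ * ‖h‖ * Real.sqrt c' ^ n := by ring
  have hs1 : Real.sqrt c' < 1 := by
    have := Real.sqrt_lt_sqrt hc'0 hc'1
    simpa using this
  have hlim : Tendsto (fun n : ℕ => ‖C‖ * ‖h‖ * Real.sqrt c' ^ n) atTop (nhds 0) := by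
    have : Tendsto (fun n : ℕ => Real.sqrt c' ^ n) atTop (nhds 0) :=
      tendsto_pow_atTop_nhds_zero_of_lt_one (Real.sqrt_nonneg _) hs1
    simpa using this.const_mul (‖C‖ * ‖h‖)
  exact ge_of_tendsto' hlim key
end

section
/- Let T = (T₁, …, T_d) be a d-tuple of bounded operators on a complex Hilbert space H. Then the following are equivalent: (1) T is simultaneously similar to a row contraction of class C_{·0}, i.e., there exists an invertible W ∈ B(H) such that the tuple Z with Zᵢ = W Tᵢ W⁻¹ satisfies ∑ᵢ Zᵢ Zᵢ* ≤ 1 and Φ_Zⁿ(1) → 0 in the strong operator topology; (2) there exist a positive operator r ∈ B(H), real numbers 0 < a ≤ b, and an operator R ∈ B(H) such that the partial sums ∑_{n=0}^{N−1} Φ_Tⁿ(r) converge to R in the strong operator topology as N → ∞ and a·1 ≤ R ≤ b·1; (3) there exists an invertible positive operator R ∈ B(H) that is pure superharmonic for Φ_T, i.e., Φ_T(R) ≤ R and Φ_Tⁿ(R) → 0 in the strong operator topology. -/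
open Filter ContinuousLinearMap

/-- The completely positive map `Φ_T(x) = ∑ i, Tᵢ x Tᵢ*` associated with a
`d`-tuple `T` of bounded operators. -/
noncomputable def rowCP {E : Type*} [NormedAddCommGroup E] [InnerProductSpace ℂ E]
    [CompleteSpace E] {d : ℕ} (T : Fin d → E →L[ℂ] E) :
    (E →L[ℂ] E) → (E →L[ℂ] E) :=
  fun X => ∑ i, T i ∘L X ∘L adjoint (T i)

section Helpers

variable {H : Type*} [NormedAddCommGroup H] [InnerProductSpace ℂ H] [CompleteSpace H]
    {d : ℕ} (T : Fin d → H →L[ℂ] H)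

lemma rowCP_eq_sum_mul (X : H →L[ℂ] H) : rowCP T X = ∑ i, T i * X * star (T i) := by
  simp [rowCP, mul_def, star_eq_adjoint, comp_assoc]

lemma conj_nonneg (S : H →L[ℂ] H) {X : H →L[ℂ] H} (hX : 0 ≤ X) :
    0 ≤ S * X * star S := by
  rw [nonneg_iff_isPositive] at hX ⊢
  simpa [mul_def, star_eq_adjoint, comp_assoc] using hX.conj_adjoint S

lemma conj_le (S : H →L[ℂ] H) {X Y : H →L[ℂ] H} (h : X ≤ Y) :
    S * X * star S ≤ S * Y * star S := by
  have := conj_nonneg S (sub_nonneg.mpr h)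
  rw [mul_sub, sub_mul] at this
  exact sub_nonneg.mp this

lemma smul_sa {a : ℝ} {X : H →L[ℂ] H} (hX : IsSelfAdjoint X) :
    IsSelfAdjoint ((a:ℂ) • X) := by
  have : star ((a:ℂ) • X) = (a:ℂ) • X := by
    rw [star_smul, Complex.star_def, Complex.conj_ofReal, hX.star_eq]
  exact this

lemma smul_nonneg_op {a : ℝ} (ha : 0 ≤ a) {X : H →L[ℂ] H} (hX : 0 ≤ X) :
    0 ≤ (a : ℂ) • X := by
  rw [nonneg_iff_isPositive] at hX ⊢
  refine isPositive_def'.mpr ⟨smul_sa hX.isSelfAdjoint, fun x => ?_⟩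
  have h := hX.2 x
  simp only [reApplyInnerSelf, coe_smul', Pi.smul_apply, inner_smul_left,
    Complex.conj_ofReal, RCLike.re_to_complex] at *
  simp only [Complex.re_ofReal_mul]
  exact mul_nonneg ha h

lemma le_norm_smul_one {X : H →L[ℂ] H} (hX : IsSelfAdjoint X) {c : ℝ} (hc : ‖X‖ ≤ c) :
    X ≤ (c : ℂ) • 1 := by
  rw [ContinuousLinearMap.le_def]
  have hsa : IsSelfAdjoint ((c:ℂ) • (1:H →L[ℂ] H)) := smul_sa (IsSelfAdjoint.one _)
  refine isPositive_def'.mpr ⟨hsa.sub hX, fun x => ?_⟩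
  simp only [reApplyInnerSelf, sub_apply, coe_smul', Pi.smul_apply, one_apply,
    inner_sub_left, inner_smul_left, Complex.conj_ofReal, map_sub, RCLike.re_to_complex,
    Complex.sub_re, Complex.re_ofReal_mul]
  have h1 : (inner ℂ (X x) x : ℂ).re ≤ c * ‖x‖^2 := by
    calc (inner ℂ (X x) x : ℂ).re ≤ ‖(inner ℂ (X x) x : ℂ)‖ := Complex.abs_re_le_norm _ |>.trans_eq rfl |> (fun h => le_trans (le_abs_self _) h)
    _ ≤ ‖X x‖ * ‖x‖ := norm_inner_le_norm _ _
    _ ≤ (‖X‖ * ‖x‖) * ‖x‖ := by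
        have := X.le_opNorm x
        nlinarith [norm_nonneg x]
    _ ≤ c * ‖x‖^2 := by nlinarith [norm_nonneg x, sq_nonneg ‖x‖, (norm_nonneg X).trans hc]
  have h2 : (inner ℂ x x : ℂ).re = ‖x‖^2 := by
    have := inner_self_eq_norm_sq (𝕜 := ℂ) x
    simpa using this
  rw [show (1 : H →L[ℂ] H) x = x from rfl, h2]; linarith

lemma rowCP_sub (X Y : H →L[ℂ] H) : rowCP T (X - Y) = rowCP T X - rowCP T Y := by
  simp [rowCP_eq_sum_mul, mul_sub, sub_mul, Finset.sum_sub_distrib]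

lemma conj_conj (S : (H →L[ℂ] H)ˣ) (X : H →L[ℂ] H) :
    S.val * (S⁻¹.val * X * star S⁻¹.val) * star S.val = X := by
  calc S.val * (S⁻¹.val * X * star S⁻¹.val) * star S.val
      = (S.val * S⁻¹.val) * X * (star S⁻¹.val * star S.val) := by noncomm_ring
    _ = X := by rw [← star_mul, Units.mul_inv, star_one, mul_one, one_mul]

lemma conj_conj' (S : (H →L[ℂ] H)ˣ) (X : H →L[ℂ] H) :
    S⁻¹.val * (S.val * X * star S.val) * star S⁻¹.val = X := by
  calc S⁻¹.val * (S.val * X * star S.val) * star S⁻¹.val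
      = (S⁻¹.val * S.val) * X * (star S.val * star S⁻¹.val) := by noncomm_ring
    _ = X := by rw [← star_mul, Units.inv_mul, star_one, mul_one, one_mul]

lemma rowCP_conj (S : (H →L[ℂ] H)ˣ) (X : H →L[ℂ] H) :
    rowCP (fun i => S.val * T i * S⁻¹.val) X
      = S.val * rowCP T (S⁻¹.val * X * star S⁻¹.val) * star S.val := by
  simp only [rowCP_eq_sum_mul, Finset.mul_sum, Finset.sum_mul]
  refine Finset.sum_congr rfl fun i _ => ?_
  simp only [star_mul]
  noncomm_ring

lemma rowCP_conj_iter (S : (H →L[ℂ] H)ˣ) (n : ℕ) (X : H →L[ℂ] H) :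
    (rowCP (fun i => S.val * T i * S⁻¹.val))^[n] X
      = S.val * (rowCP T)^[n] (S⁻¹.val * X * star S⁻¹.val) * star S.val := by
  induction n generalizing X with
  | zero => simp [conj_conj]
  | succ n ih =>
    rw [Function.iterate_succ_apply, ih, Function.iterate_succ_apply]
    congr 2
    rw [rowCP_conj, conj_conj']

end Helpers

section Helpers2

variable {H : Type*} [NormedAddCommGroup H] [InnerProductSpace ℂ H] [CompleteSpace H]
    {d : ℕ} (T : Fin d → H →L[ℂ] H)

lemma rowCP_one : rowCP T 1 = ∑ i, T i ∘L adjoint (T i) := by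
  simp [rowCP_eq_sum_mul, mul_one, mul_def, star_eq_adjoint]

lemma rowCP_finsum {ι : Type*} (F : Finset ι) (g : ι → H →L[ℂ] H) :
    rowCP T (∑ n ∈ F, g n) = ∑ n ∈ F, rowCP T (g n) := by
  simp only [rowCP_eq_sum_mul, Finset.mul_sum, Finset.sum_mul]
  rw [Finset.sum_comm]

lemma rowCP_iter_sub (n : ℕ) (X Y : H →L[ℂ] H) :
    (rowCP T)^[n] (X - Y) = (rowCP T)^[n] X - (rowCP T)^[n] Y := by
  induction n generalizing X Y with
  | zero => simp
  | succ n ih => rw [Function.iterate_succ_apply, rowCP_sub, ih,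
      Function.iterate_succ_apply, Function.iterate_succ_apply]

lemma smul_le_smul_op {a : ℝ} (ha : 0 ≤ a) {X Y : H →L[ℂ] H} (h : X ≤ Y) :
    (a:ℂ) • X ≤ (a:ℂ) • Y := by
  have := smul_nonneg_op ha (sub_nonneg.mpr h)
  rw [smul_sub] at this
  exact sub_nonneg.mp this

lemma inv_facts {R Q : H →L[ℂ] H} (hR0 : 0 ≤ R) (hQR : Q * R = 1) (hRQ : R * Q = 1) :
    star Q = Q ∧ 0 ≤ Q := by
  have hRstar : star R = R := ((nonneg_iff_isPositive R).mp hR0).isSelfAdjoint.star_eq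
  have hQstar : star Q = Q := by
    calc star Q = star Q * (R * Q) := by rw [hRQ, mul_one]
    _ = (star Q * star R) * Q := by rw [hRstar, mul_assoc]
    _ = star (R * Q) * Q := by rw [star_mul]
    _ = Q := by rw [hRQ, star_one, one_mul]
  refine ⟨hQstar, ?_⟩
  have h := conj_nonneg Q hR0
  rwa [hQstar, show Q * R * Q = Q from by rw [hQR, one_mul]] at h

end Helpers2
section Impl

variable {H : Type*} [NormedAddCommGroup H] [InnerProductSpace ℂ H] [CompleteSpace H]
    {d : ℕ} (T : Fin d → H →L[ℂ] H)

lemma impl_1_3 (W : (H →L[ℂ] H)ˣ)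
    (hpos : ((1 : H →L[ℂ] H) -
      ∑ i, (W.val * T i * W⁻¹.val) ∘L adjoint (W.val * T i * W⁻¹.val)).IsPositive)
    (htend : ∀ x : H,
      Tendsto (fun n : ℕ => ((rowCP (fun i => W.val * T i * W⁻¹.val))^[n] 1) x)
        atTop (nhds 0)) :
    ∃ R : H →L[ℂ] H, R.IsPositive ∧ IsUnit R ∧ (R - rowCP T R).IsPositive ∧
      ∀ x : H, Tendsto (fun n : ℕ => ((rowCP T)^[n] R) x) atTop (nhds 0) := by
  set Z : Fin d → H →L[ℂ] H := fun i => W.val * T i * W⁻¹.val with hZ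
  set R : H →L[ℂ] H := W⁻¹.val * star W⁻¹.val with hR
  have h1pos : (0:H →L[ℂ] H) ≤ 1 := (nonneg_iff_isPositive _).mpr isPositive_one
  have hR0 : 0 ≤ R := by
    have := conj_nonneg W⁻¹.val h1pos
    rwa [mul_one] at this
  have hψ1 : W⁻¹.val * 1 * star W⁻¹.val = R := by rw [mul_one]
  have hpos' : (0:H →L[ℂ] H) ≤ 1 - rowCP Z 1 := by
    rw [nonneg_iff_isPositive, rowCP_one]
    exact hpos
  have hΦ1 : rowCP Z 1 = W.val * rowCP T R * star W.val := by
    rw [hZ, rowCP_conj, hψ1]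
  refine ⟨R, (nonneg_iff_isPositive R).mp hR0, ?_, ?_, ?_⟩
  · exact (Units.isUnit W⁻¹).mul (Units.isUnit W⁻¹).star
  · have hle : rowCP Z 1 ≤ 1 := sub_nonneg.mp hpos'
    have h2 := conj_le W⁻¹.val hle
    rw [hΦ1, conj_conj', mul_one] at h2
    rw [← nonneg_iff_isPositive]
    exact sub_nonneg.mpr h2
  · intro x
    have hiter : ∀ n : ℕ, (rowCP T)^[n] R
        = W⁻¹.val * ((rowCP Z)^[n] 1) * star W⁻¹.val := by
      intro n
      rw [hZ, rowCP_conj_iter, hψ1, conj_conj']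
    have h3 := (W⁻¹.val.continuous.tendsto 0).comp (htend (star W⁻¹.val x))
    simp only [Function.comp_def, map_zero] at h3
    refine h3.congr fun n => ?_
    rw [hiter n]
    simp [mul_apply]

end Impl
section Impl31

variable {H : Type*} [NormedAddCommGroup H] [InnerProductSpace ℂ H] [CompleteSpace H]
    {d : ℕ} (T : Fin d → H →L[ℂ] H)

lemma impl_3_1 (R : H →L[ℂ] H) (hRpos : R.IsPositive) (hRunit : IsUnit R)
    (hsup : (R - rowCP T R).IsPositive)
    (htend : ∀ x : H, Tendsto (fun n : ℕ => ((rowCP T)^[n] R) x) atTop (nhds 0)) :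
    ∃ W : (H →L[ℂ] H)ˣ,
      ((1 : H →L[ℂ] H) -
        ∑ i, (W.val * T i * W⁻¹.val) ∘L adjoint (W.val * T i * W⁻¹.val)).IsPositive ∧
      ∀ x : H,
        Tendsto (fun n : ℕ => ((rowCP (fun i => W.val * T i * W⁻¹.val))^[n] 1) x)
          atTop (nhds 0) := by
  have hR0 : 0 ≤ R := (nonneg_iff_isPositive R).mpr hRpos
  obtain ⟨u, hu⟩ := hRunit
  set Q : H →L[ℂ] H := u⁻¹.val with hQdef
  have hQR : Q * R = 1 := by rw [hQdef, ← hu, Units.inv_mul]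
  have hRQ : R * Q = 1 := by rw [hQdef, ← hu, Units.mul_inv]
  obtain ⟨hQstar, hQ0⟩ := inv_facts hR0 hQR hRQ
  set s : H →L[ℂ] H := CFC.sqrt Q with hsdef
  have hs0 : 0 ≤ s := CFC.sqrt_nonneg _
  have hss : s * s = Q := CFC.sqrt_mul_sqrt_self Q hQ0
  have hsstar : star s = s := ((nonneg_iff_isPositive s).mp hs0).isSelfAdjoint.star_eq
  have hQs : Q * s = s * Q := by rw [← hss, mul_assoc]
  have hsR : s * R = R * s := by
    calc s * R = (R * Q) * (s * R) := by rw [hRQ, one_mul]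
    _ = R * ((Q * s) * R) := by simp only [mul_assoc]
    _ = R * ((s * Q) * R) := by rw [hQs]
    _ = (R * s) * (Q * R) := by simp only [mul_assoc]
    _ = R * s := by rw [hQR, mul_one]
  have hsu : IsUnit s := by
    refine isUnit_iff_exists.mpr ⟨R * s, ?_, ?_⟩
    · calc s * (R * s) = (s * R) * s := by rw [mul_assoc]
      _ = R * (s * s) := by rw [hsR, mul_assoc]
      _ = 1 := by rw [hss, hRQ]
    · calc (R * s) * s = R * (s * s) := by rw [mul_assoc]
      _ = 1 := by rw [hss, hRQ]
  set W := hsu.unit with hWdef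
  have hWv : W.val = s := hsu.unit_spec
  have hWinv : W⁻¹.val = R * s := by
    apply Units.inv_eq_of_mul_eq_one_right
    rw [hWv]
    calc s * (R * s) = (s * R) * s := by rw [mul_assoc]
    _ = R * (s * s) := by rw [hsR, mul_assoc]
    _ = 1 := by rw [hss, hRQ]
  have hstarWinv : star W⁻¹.val = W⁻¹.val := by
    rw [hWinv, star_mul, hsstar, hRpos.isSelfAdjoint.star_eq, ← hsR]
  have hψ1 : W⁻¹.val * 1 * star W⁻¹.val = R := by
    rw [mul_one, hstarWinv, hWinv]
    calc (R * s) * (R * s) = R * ((s * R) * s) := by simp only [mul_assoc]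
    _ = R * (R * (s * s)) := by rw [hsR, mul_assoc]
    _ = R * (R * Q) := by rw [hss]
    _ = R := by rw [hRQ, mul_one]
  have hsRs : s * R * s = 1 := by rw [hsR, mul_assoc, hss, hRQ]
  have hstarW : star W.val = W.val := by rw [hWv, hsstar]
  refine ⟨W, ?_, ?_⟩
  · rw [← rowCP_one (fun i => W.val * T i * W⁻¹.val), ← nonneg_iff_isPositive]
    have hkey : (1:H →L[ℂ] H) - rowCP (fun i => W.val * T i * W⁻¹.val) 1
        = W.val * (R - rowCP T R) * star W.val := by
      rw [rowCP_conj, hψ1, mul_sub, sub_mul]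
      congr 1
      rw [hstarW, hWv, hsRs]
    rw [hkey]
    exact conj_nonneg _ ((nonneg_iff_isPositive _).mpr hsup)
  · intro x
    have hiter : ∀ n : ℕ, (rowCP (fun i => W.val * T i * W⁻¹.val))^[n] 1
        = W.val * ((rowCP T)^[n] R) * star W.val := by
      intro n
      rw [rowCP_conj_iter, hψ1]
    have h3 := (W.val.continuous.tendsto 0).comp (htend (star W.val x))
    simp only [Function.comp_def, map_zero] at h3
    refine h3.congr fun n => ?_
    rw [hiter n]
    simp [mul_apply]

end Impl31
section Impl32

variable {H : Type*} [NormedAddCommGroup H] [InnerProductSpace ℂ H] [CompleteSpace H]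
    {d : ℕ} (T : Fin d → H →L[ℂ] H)

lemma impl_3_2 (R : H →L[ℂ] H) (hRpos : R.IsPositive) (hRunit : IsUnit R)
    (hsup : (R - rowCP T R).IsPositive)
    (htend : ∀ x : H, Tendsto (fun n : ℕ => ((rowCP T)^[n] R) x) atTop (nhds 0)) :
    ∃ (r R' : H →L[ℂ] H) (a b : ℝ), r.IsPositive ∧ 0 < a ∧ a ≤ b ∧
      (∀ x : H,
        Tendsto (fun N : ℕ => (∑ n ∈ Finset.range N, (rowCP T)^[n] r) x)
          atTop (nhds (R' x))) ∧
      (R' - (a : ℂ) • (1 : H →L[ℂ] H)).IsPositive ∧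
      ((b : ℂ) • (1 : H →L[ℂ] H) - R').IsPositive := by
  have hR0 : 0 ≤ R := (nonneg_iff_isPositive R).mpr hRpos
  obtain ⟨u, hu⟩ := hRunit
  set Q : H →L[ℂ] H := u⁻¹.val with hQdef
  have hQR : Q * R = 1 := by rw [hQdef, ← hu, Units.inv_mul]
  have hRQ : R * Q = 1 := by rw [hQdef, ← hu, Units.mul_inv]
  obtain ⟨hQstar, hQ0⟩ := inv_facts hR0 hQR hRQ
  set s : H →L[ℂ] H := CFC.sqrt R with hsdef
  have hs0 : 0 ≤ s := CFC.sqrt_nonneg _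
  have hss : s * s = R := CFC.sqrt_mul_sqrt_self R hR0
  have hsstar : star s = s := ((nonneg_iff_isPositive s).mp hs0).isSelfAdjoint.star_eq
  have hRs : R * s = s * R := by rw [← hss, mul_assoc]
  have hQs : Q * s = s * Q := by
    calc Q * s = Q * s * (R * Q) := by rw [hRQ, mul_one]
    _ = Q * ((s * R) * Q) := by simp only [mul_assoc]
    _ = Q * ((R * s) * Q) := by rw [hRs]
    _ = (Q * R) * (s * Q) := by simp only [mul_assoc]
    _ = s * Q := by rw [hQR, one_mul]
  have hsQs : s * Q * s = 1 := by
    rw [← hQs, mul_assoc, hss]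
    exact hQR
  -- the positive element r
  set r : H →L[ℂ] H := R - rowCP T R with hrdef
  -- partial sums
  have hsum : ∀ N : ℕ, ∑ n ∈ Finset.range N, (rowCP T)^[n] r = R - (rowCP T)^[N] R := by
    intro N
    induction N with
    | zero => simp
    | succ N ih =>
      rw [Finset.sum_range_succ, ih, hrdef, rowCP_iter_sub, Function.iterate_succ_apply]
      abel
  -- the bound a
  set a : ℝ := (1 + ‖Q‖)⁻¹ with hadef
  have hQnorm : (0:ℝ) < 1 + ‖Q‖ := by positivity
  have ha : 0 < a := by positivity
  have hQle : Q ≤ ((1 + ‖Q‖ : ℝ) : ℂ) • 1 :=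
    le_norm_smul_one hQstar (by linarith)
  have haQ : (a:ℂ) • Q ≤ 1 := by
    have h1 := smul_le_smul_op ha.le hQle
    rwa [smul_smul, ← Complex.ofReal_mul, inv_mul_cancel₀ hQnorm.ne', Complex.ofReal_one,
      one_smul] at h1
  have halow : (a:ℂ) • (1:H →L[ℂ] H) ≤ R := by
    have h2 := conj_le s haQ
    rw [hsstar] at h2
    calc (a:ℂ) • (1:H →L[ℂ] H) = (a:ℂ) • (s * Q * s) := by rw [hsQs]
    _ = s * ((a:ℂ) • Q) * s := by
        rw [mul_smul_comm, smul_mul_assoc]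
    _ ≤ s * 1 * s := h2
    _ = R := by rw [mul_one, hss]
  set b : ℝ := max ‖R‖ a with hbdef
  have hRb : R ≤ (b:ℂ) • 1 := le_norm_smul_one hRpos.isSelfAdjoint (le_max_left _ _)
  refine ⟨r, R, a, b, hsup, ha, le_max_right _ _, ?_, ?_, ?_⟩
  · intro x
    have h4 := (tendsto_const_nhds (x := R x) (f := atTop (α := ℕ))).sub (htend x)
    rw [sub_zero] at h4
    refine h4.congr fun N => ?_
    rw [hsum N, sub_apply]
  · rw [← nonneg_iff_isPositive]
    exact sub_nonneg.mpr halow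
  · rw [← nonneg_iff_isPositive]
    exact sub_nonneg.mpr hRb

end Impl32
section Impl23

variable {H : Type*} [NormedAddCommGroup H] [InnerProductSpace ℂ H] [CompleteSpace H]
    {d : ℕ} (T : Fin d → H →L[ℂ] H)

lemma impl_2_3 (r R : H →L[ℂ] H) (a b : ℝ) (hr : r.IsPositive) (ha : 0 < a)
    (hab : a ≤ b)
    (hconv : ∀ x : H,
      Tendsto (fun N : ℕ => (∑ n ∈ Finset.range N, (rowCP T)^[n] r) x)
        atTop (nhds (R x)))
    (hRa : (R - (a : ℂ) • (1 : H →L[ℂ] H)).IsPositive)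
    (hRb : ((b : ℂ) • (1 : H →L[ℂ] H) - R).IsPositive) :
    ∃ R' : H →L[ℂ] H, R'.IsPositive ∧ IsUnit R' ∧ (R' - rowCP T R').IsPositive ∧
      ∀ x : H, Tendsto (fun n : ℕ => ((rowCP T)^[n] R') x) atTop (nhds 0) := by
  set Sf : ℕ → H →L[ℂ] H := fun N => ∑ n ∈ Finset.range N, (rowCP T)^[n] r with hSf
  -- positivity of R
  have hR0 : 0 ≤ R := by
    have h1 : (0:H →L[ℂ] H) ≤ (a:ℂ) • 1 :=
      smul_nonneg_op ha.le ((nonneg_iff_isPositive _).mpr isPositive_one)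
    have h2 : (a:ℂ) • (1:H →L[ℂ] H) ≤ R := sub_nonneg.mp ((nonneg_iff_isPositive _).mpr hRa)
    exact h1.trans h2
  have hRpos : R.IsPositive := (nonneg_iff_isPositive R).mp hR0
  -- R is a unit
  have hRunit : IsUnit R := by
    refine isUnit_of_forall_le_norm_inner_map R (c := ⟨a, ha.le⟩) (by exact_mod_cast ha)
      fun x => ?_
    have h3 := hRa.2 x
    simp only [reApplyInnerSelf, sub_apply, coe_smul', Pi.smul_apply, one_apply,
      inner_sub_left, inner_smul_left, Complex.conj_ofReal, map_sub, RCLike.re_to_complex,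
      Complex.sub_re, Complex.re_ofReal_mul] at h3
    have h2 : (inner ℂ x x : ℂ).re = ‖x‖^2 := by
      have := inner_self_eq_norm_sq (𝕜 := ℂ) x
      simpa using this
    rw [show (1 : H →L[ℂ] H) x = x from rfl, h2] at h3
    have h4 : a * ‖x‖^2 ≤ (inner ℂ (R x) x : ℂ).re := by linarith
    calc ‖x‖^2 * ((⟨a, ha.le⟩ : NNReal) : ℝ) = a * ‖x‖^2 := by
          simp [mul_comm]
    _ ≤ (inner ℂ (R x) x : ℂ).re := h4
    _ ≤ ‖(inner ℂ (R x) x : ℂ)‖ := Complex.abs_re_le_norm _ |>.trans_eq rfl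
          |> (fun h => le_trans (le_abs_self _) h)
  -- the shift identity
  have hshift : ∀ N : ℕ, rowCP T (Sf N) = Sf (N + 1) - r := by
    intro N
    rw [hSf]
    simp only
    rw [rowCP_finsum]
    have h5 : ∀ n : ℕ, rowCP T ((rowCP T)^[n] r) = (rowCP T)^[n + 1] r := fun n =>
      (Function.iterate_succ_apply' (rowCP T) n r).symm
    rw [Finset.sum_congr rfl fun n _ => h5 n]
    rw [Finset.sum_range_succ' (fun n => (rowCP T)^[n] r) N]
    simp [add_sub_cancel_right]
  -- key identity : rowCP T R = R - r
  have hkey : rowCP T R = R - r := by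
    ext x
    have limit1 : Tendsto (fun N => (rowCP T (Sf N)) x) atTop (nhds ((rowCP T R) x)) := by
      have : ∀ N, (rowCP T (Sf N)) x = ∑ i, T i ((Sf N) (adjoint (T i) x)) := by
        intro N
        simp [rowCP, sum_apply, comp_apply]
      simp only [this]
      have : (rowCP T R) x = ∑ i, T i (R (adjoint (T i) x)) := by
        simp [rowCP, sum_apply, comp_apply]
      rw [this]
      exact tendsto_finset_sum _ fun i _ =>
        ((T i).continuous.tendsto _).comp (hconv (adjoint (T i) x))
    have limit2 : Tendsto (fun N => (rowCP T (Sf N)) x) atTop (nhds (R x - r x)) := by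
      have h6 : Tendsto (fun N => Sf (N + 1) x) atTop (nhds (R x)) :=
        (hconv x).comp (tendsto_add_atTop_nat 1)
      have h7 := h6.sub (tendsto_const_nhds (x := r x) (f := atTop (α := ℕ)))
      refine h7.congr fun N => ?_
      rw [hshift N, sub_apply]
    have := tendsto_nhds_unique limit1 limit2
    rw [this, sub_apply]
  have hsup : (R - rowCP T R).IsPositive := by
    rw [hkey]
    simpa using hr
  -- iterates
  have hiter : ∀ N : ℕ, (rowCP T)^[N] R = R - Sf N := by
    intro N
    induction N with
    | zero => simp [hSf]
    | succ N ih =>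
      rw [Function.iterate_succ_apply', ih, rowCP_sub, hkey, hshift N]
      abel
  refine ⟨R, hRpos, hRunit, hsup, fun x => ?_⟩
  have h8 := (tendsto_const_nhds (x := R x) (f := atTop (α := ℕ))).sub (hconv x)
  rw [sub_self] at h8
  refine h8.congr fun N => ?_
  rw [hiter N, sub_apply]

end Impl23

/-- A `d`-tuple `T` is simultaneously similar to a row contraction of class `C_{·0}`
iff the partial sums `∑_{n<N} Φ_Tⁿ(r)` of some positive `r` converge in the SOT to an
operator `R` with `a·1 ≤ R ≤ b·1` for some `0 < a ≤ b`, iff `Φ_T` admits an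
invertible (positive) pure superharmonic operator. -/
theorem similar_to_Czero_row_contraction_tfae
    {H : Type*} [NormedAddCommGroup H] [InnerProductSpace ℂ H] [CompleteSpace H]
    {d : ℕ} (hd : 1 ≤ d) (T : Fin d → H →L[ℂ] H) :
    List.TFAE
      [(∃ W : (H →L[ℂ] H)ˣ,
          ((1 : H →L[ℂ] H) -
            ∑ i, (W.val * T i * W⁻¹.val) ∘L adjoint (W.val * T i * W⁻¹.val)).IsPositive ∧
          ∀ x : H,
            Tendsto (fun n : ℕ => ((rowCP (fun i => W.val * T i * W⁻¹.val))^[n] 1) x)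
              atTop (nhds 0)),
        (∃ (r R : H →L[ℂ] H) (a b : ℝ), r.IsPositive ∧ 0 < a ∧ a ≤ b ∧
          (∀ x : H,
            Tendsto (fun N : ℕ => (∑ n ∈ Finset.range N, (rowCP T)^[n] r) x)
              atTop (nhds (R x))) ∧
          (R - (a : ℂ) • (1 : H →L[ℂ] H)).IsPositive ∧
          ((b : ℂ) • (1 : H →L[ℂ] H) - R).IsPositive),
        (∃ R : H →L[ℂ] H, R.IsPositive ∧ IsUnit R ∧ (R - rowCP T R).IsPositive ∧
          ∀ x : H, Tendsto (fun n : ℕ => ((rowCP T)^[n] R) x) atTop (nhds 0))] := by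
  tfae_have 1 → 3 := by
    rintro ⟨W, hpos, htend⟩
    exact impl_1_3 T W hpos htend
  tfae_have 3 → 1 := by
    rintro ⟨R, h1, h2, h3, h4⟩
    exact impl_3_1 T R h1 h2 h3 h4
  tfae_have 3 → 2 := by
    rintro ⟨R, h1, h2, h3, h4⟩
    exact impl_3_2 T R h1 h2 h3 h4
  tfae_have 2 → 3 := by
    rintro ⟨r, R, a, b, h1, h2, h3, h4, h5, h6⟩
    exact impl_2_3 T r R a b h1 h2 h3 h4 h5 h6
  tfae_finish
end
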